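/- arXiv:2604.19602 — 2 statements merged into one kernel-verified Lean document; each statement's English description precedes it below -/
import Mathlib

section
/- Let A, B = [b_ij] be n×n complex positive semidefinite matrices with r = rank(B) ≥ 1. Suppose that for every rank-r orthogonal projection P in M_n one has A ∘ P ⪰ μ_{n−r+1}(A) (I ∘ P). Then λ_min(A ∘ B) ≥ (μ_{n−r+1}(A)/κ_eff(B)) · min_{1≤i≤n} b_ii. -/
open Matrix
open scoped Matrix ComplexOrder

/-- `mu m A` is the smallest of the eigenvalues of all `m × m` principal submatrices of `A`
(principal submatrices are obtained by selecting the same set of `m` row and column indices). -/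
noncomputable def mu {n : ℕ} (m : ℕ) (A : Matrix (Fin n) (Fin n) ℂ) : ℝ :=
  sInf {t : ℝ | ∃ f : Fin m → Fin n, Function.Injective f ∧
    ∃ h : (A.submatrix f f).IsHermitian, ∃ i : Fin m, t = h.eigenvalues i}

/-- The smallest eigenvalue of a Hermitian matrix. -/
noncomputable def lambdaMin {n : ℕ} {A : Matrix (Fin n) (Fin n) ℂ} (hA : A.IsHermitian) : ℝ :=
  ⨅ i, hA.eigenvalues i

/-- The largest eigenvalue of a Hermitian matrix. -/
noncomputable def lambdaMax {n : ℕ} {A : Matrix (Fin n) (Fin n) ℂ} (hA : A.IsHermitian) : ℝ :=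
  ⨆ i, hA.eigenvalues i

/-- The smallest positive eigenvalue of a Hermitian matrix. -/
noncomputable def lambdaMinPos {n : ℕ} {A : Matrix (Fin n) (Fin n) ℂ} (hA : A.IsHermitian) : ℝ :=
  sInf {t : ℝ | (∃ i, hA.eigenvalues i = t) ∧ 0 < t}

/-- The effective condition number of a positive semidefinite matrix: the ratio of its largest
and smallest positive eigenvalues. -/
noncomputable def kappaEff {n : ℕ} {B : Matrix (Fin n) (Fin n) ℂ} (hB : B.IsHermitian) : ℝ :=
  lambdaMax hB / lambdaMinPos hB

/-!
Let `P` be the orthogonal projection onto the range of `B`. Spectrally, `λ_r P ⪯ B ⪯ λ₁ P`.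
The lower bound and the Schur product theorem give `A ∘ B ⪰ λ_r (A ∘ P)`, the hypothesis gives
`A ∘ P ⪰ μ (I ∘ P)`, and the upper bound gives `p_ii ≥ b_ii / λ₁ ≥ min_i b_ii / λ₁`.
-/

open Unitary
open scoped MatrixOrder

namespace Matrix

theorem hadamard_sub {m n α : Type*} [NonUnitalNonAssocRing α] (A B C : Matrix m n α) :
    A ⊙ (B - C) = A ⊙ B - A ⊙ C := by
  ext
  simp [mul_sub]

variable {𝕜 n : Type*} [RCLike 𝕜]

theorem re_diag_le_re_diag_of_le {X Y : Matrix n n 𝕜} (h : X ≤ Y) (i : n) :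
    RCLike.re (X i i) ≤ RCLike.re (Y i i) := by
  have h_diag := (le_iff.mp h).diag_nonneg (i := i)
  rw [sub_apply, sub_nonneg] at h_diag
  exact (RCLike.le_iff_re_im.mp h_diag).1

theorem PosSemidef.hadamard_le_hadamard {A X Y : Matrix n n 𝕜} (hA : A.PosSemidef)
    (h : X ≤ Y) : A ⊙ X ≤ A ⊙ Y := by
  rw [le_iff, ← hadamard_sub]
  exact hA.hadamard h

variable [Fintype n] [DecidableEq n]

theorem smul_one_le_one_hadamard {P : Matrix n n 𝕜} (hP : P.IsHermitian) {c : ℝ}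
    (h : ∀ i, c ≤ RCLike.re (P i i)) : c • (1 : Matrix n n 𝕜) ≤ 1 ⊙ P := by
  rw [le_iff, one_hadamard, ← Algebra.algebraMap_eq_smul_one, algebraMap_eq_diagonal,
    diagonal_sub, posSemidef_diagonal_iff]
  intro i
  rw [diag_apply, ← hP.coe_re_apply_self i, Pi.algebraMap_apply, RCLike.algebraMap_eq_ofReal,
    sub_nonneg, RCLike.ofReal_le_ofReal]
  exact h i

theorem PosSemidef.exists_eigenvalues_pos {A : Matrix n n 𝕜} (hA : A.PosSemidef)
    (h : 0 < A.rank) : ∃ i, 0 < hA.1.eigenvalues i := by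
  rw [hA.1.rank_eq_card_non_zero_eigs, Fintype.card_pos_iff] at h
  obtain ⟨i, hi⟩ := h
  exact ⟨i, (hA.eigenvalues_nonneg i).lt_of_ne' hi⟩

namespace IsHermitian

variable {A : Matrix n n 𝕜} (hA : A.IsHermitian)

theorem le_eigenvalues_of_smul_one_le {c : ℝ} (h : c • (1 : Matrix n n 𝕜) ≤ A) (i : n) :
    c ≤ hA.eigenvalues i := by
  rw [← Algebra.algebraMap_eq_smul_one] at h
  exact (algebraMap_le_iff_le_spectrum (a := A)).mp h _ (hA.eigenvalues_mem_spectrum_real i)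

theorem cfc_id : hA.cfc id = A := hA.spectral_theorem.symm

theorem cfc_mul_cfc (f g : ℝ → ℝ) : hA.cfc f * hA.cfc g = hA.cfc (f * g) := by
  simp only [IsHermitian.cfc, ← map_mul, diagonal_mul_diagonal]
  congr 2
  ext i
  simp

theorem smul_cfc (t : ℝ) (f : ℝ → ℝ) : t • hA.cfc f = hA.cfc (t • f) := by
  rw [RCLike.real_smul_eq_coe_smul (K := 𝕜), IsHermitian.cfc, IsHermitian.cfc, ← map_smul,
    ← diagonal_smul]
  congr 2
  ext i
  simp

theorem isHermitian_cfc (f : ℝ → ℝ) : (hA.cfc f).IsHermitian := by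
  rw [IsHermitian.cfc, conjStarAlgAut_apply, ← coe_star]
  exact isHermitian_mul_mul_conjTranspose _
    (isHermitian_diagonal_iff.mpr fun _ => RCLike.conj_ofReal _)

theorem cfc_le_cfc {f g : ℝ → ℝ} (h : ∀ i, f (hA.eigenvalues i) ≤ g (hA.eigenvalues i)) :
    hA.cfc f ≤ hA.cfc g := by
  rw [le_iff, IsHermitian.cfc, IsHermitian.cfc, ← map_sub, diagonal_sub, conjStarAlgAut_apply,
    ← coe_star]
  refine (posSemidef_diagonal_iff.mpr fun i => ?_).mul_mul_conjTranspose_same _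
  simpa using h i

theorem rank_cfc (f : ℝ → ℝ) :
    (hA.cfc f).rank = Fintype.card {i // f (hA.eigenvalues i) ≠ 0} := by
  rw [IsHermitian.cfc, conjStarAlgAut_apply, ← coe_star]
  simp [-isUnit_iff_ne_zero, -coe_star, rank_diagonal]

noncomputable def rangeProj : Matrix n n 𝕜 := hA.cfc fun x => if x = 0 then 0 else 1

theorem isHermitian_rangeProj : hA.rangeProj.IsHermitian := hA.isHermitian_cfc _

theorem rangeProj_mul_self : hA.rangeProj * hA.rangeProj = hA.rangeProj := by
  rw [rangeProj, cfc_mul_cfc]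
  congr 1
  ext x
  by_cases hx : x = 0 <;> simp [hx]

theorem rank_rangeProj : hA.rangeProj.rank = A.rank := by
  rw [rangeProj, rank_cfc, hA.rank_eq_card_non_zero_eigs]
  simp

end IsHermitian

end Matrix

section SpectralBounds

variable {n : ℕ}

theorem mu_nonneg {A : Matrix (Fin n) (Fin n) ℂ} (hA : A.PosSemidef) (m : ℕ) :
    0 ≤ mu m A := by
  apply Real.sInf_nonneg
  rintro t ⟨f, -, hf, i, rfl⟩
  exact (hA.submatrix f).eigenvalues_nonneg i

variable {B : Matrix (Fin n) (Fin n) ℂ}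

theorem le_lambdaMin_of_smul_one_le [Nonempty (Fin n)] (hB : B.IsHermitian) {c : ℝ}
    (h : c • 1 ≤ B) : c ≤ lambdaMin hB :=
  le_ciInf (hB.le_eigenvalues_of_smul_one_le h)

theorem eigenvalues_le_lambdaMax (hB : B.IsHermitian) (i : Fin n) :
    hB.eigenvalues i ≤ lambdaMax hB :=
  le_ciSup (Set.finite_range _).bddAbove i

theorem lambdaMinPos_nonneg (hB : B.IsHermitian) : 0 ≤ lambdaMinPos hB :=
  Real.sInf_nonneg fun _ ht => ht.2.le

theorem lambdaMinPos_le_eigenvalues (hB : B.IsHermitian) {i : Fin n}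
    (hi : 0 < hB.eigenvalues i) : lambdaMinPos hB ≤ hB.eigenvalues i :=
  csInf_le ⟨0, fun _ ht => ht.2.le⟩ ⟨⟨i, rfl⟩, hi⟩

theorem lambdaMinPos_smul_rangeProj_le (hB : B.PosSemidef) :
    lambdaMinPos hB.1 • hB.1.rangeProj ≤ B := by
  rw [IsHermitian.rangeProj, IsHermitian.smul_cfc]
  refine (hB.1.cfc_le_cfc fun i => ?_).trans_eq hB.1.cfc_id
  simp only [Pi.smul_apply, smul_eq_mul, id]
  split_ifs with h
  · simp [h]
  · rw [mul_one]
    exact lambdaMinPos_le_eigenvalues hB.1 ((hB.eigenvalues_nonneg i).lt_of_ne' h)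

theorem le_lambdaMax_smul_rangeProj (hB : B.IsHermitian) :
    B ≤ lambdaMax hB • hB.rangeProj := by
  rw [IsHermitian.rangeProj, IsHermitian.smul_cfc]
  refine hB.cfc_id.symm.trans_le (hB.cfc_le_cfc fun i => ?_)
  simp only [Pi.smul_apply, smul_eq_mul, id]
  split_ifs with h
  · simp [h]
  · rw [mul_one]
    exact eigenvalues_le_lambdaMax hB i

theorem div_kappaEff_mul_iInf_diag_le (hB : B.IsHermitian)
    (hmax : 0 < lambdaMax hB) {μ : ℝ} (hμ : 0 ≤ μ) (i : Fin n) :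
    μ / kappaEff hB * ⨅ j, (B j j).re ≤
      RCLike.re (((lambdaMinPos hB * μ) • hB.rangeProj) i i) := by
  have hBP : (B i i).re ≤ lambdaMax hB * (hB.rangeProj i i).re := by
    simpa using re_diag_le_re_diag_of_le (le_lambdaMax_smul_rangeProj hB) i
  have hc : 0 ≤ μ * lambdaMinPos hB / lambdaMax hB :=
    div_nonneg (mul_nonneg hμ (lambdaMinPos_nonneg hB)) hmax.le
  calc μ / kappaEff hB * ⨅ j, (B j j).re
      = μ * lambdaMinPos hB / lambdaMax hB * ⨅ j, (B j j).re := by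
        rw [kappaEff, div_div_eq_mul_div]
    _ ≤ μ * lambdaMinPos hB / lambdaMax hB * (lambdaMax hB * (hB.rangeProj i i).re) :=
        mul_le_mul_of_nonneg_left ((ciInf_le (Set.finite_range _).bddBelow i).trans hBP) hc
    _ = RCLike.re (((lambdaMinPos hB * μ) • hB.rangeProj) i i) := by
        field_simp
        simp

end SpectralBounds

/-- If `A ⊙ P ⪰ μ_{n-r+1}(A) (I ⊙ P)` for every rank-`r` orthogonal projection `P`, then
`λ_min(A ⊙ B) ≥ (μ_{n-r+1}(A)/κ_eff(B)) · min_i b_ii`. -/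
theorem stmt_2 {n : ℕ} (A B : Matrix (Fin n) (Fin n) ℂ)
    (hA : A.PosSemidef) (hB : B.PosSemidef) (r : ℕ) (hr : r = B.rank) (hr1 : 1 ≤ r)
    (hproj : ∀ P : Matrix (Fin n) (Fin n) ℂ, P.IsHermitian → P * P = P → P.rank = r →
      (A ⊙ P - ((mu (n - r + 1) A : ℝ) : ℂ) •
        ((1 : Matrix (Fin n) (Fin n) ℂ) ⊙ P)).PosSemidef)
    (hAB : (A ⊙ B).IsHermitian) :
    lambdaMin hAB ≥ mu (n - r + 1) A / kappaEff hB.1 * ⨅ i, (B i i).re := by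
  set P := hB.1.rangeProj
  set μ := mu (n - r + 1) A
  set ℓ := lambdaMinPos hB.1
  obtain ⟨i₀, hi₀⟩ := hB.exists_eigenvalues_pos (hr ▸ hr1)
  have : Nonempty (Fin n) := ⟨i₀⟩
  have hmax : 0 < lambdaMax hB.1 := hi₀.trans_le (eigenvalues_le_lambdaMax hB.1 i₀)
  have hAP : μ • (1 ⊙ P) ≤ A ⊙ P := by
    rw [le_iff, ← Complex.coe_smul]
    exact hproj P hB.1.isHermitian_rangeProj hB.1.rangeProj_mul_self
      (hB.1.rank_rangeProj.trans hr.symm)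
  refine le_lambdaMin_of_smul_one_le hAB ?_
  calc _ ≤ 1 ⊙ ((ℓ * μ) • P) :=
        smul_one_le_one_hadamard (hB.1.isHermitian_rangeProj.smul (.all _))
          (div_kappaEff_mul_iInf_diag_le hB.1 hmax (mu_nonneg hA _))
    _ = ℓ • (μ • (1 ⊙ P)) := by rw [hadamard_smul, mul_smul]
    _ ≤ ℓ • (A ⊙ P) := smul_le_smul_of_nonneg_left hAP (lambdaMinPos_nonneg hB.1)
    _ = A ⊙ (ℓ • P) := (hadamard_smul _ _ _).symm
    _ ≤ A ⊙ B := hA.hadamard_le_hadamard (lambdaMinPos_smul_rangeProj_le hB)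
end

section
/- Let C, B ∈ M_n be Hermitian complex matrices, with B positive semidefinite and r = rank(B) ≥ 1. If μ_{n−r+1}(C) ≥ −(κ_eff(B) − 1) λ_min(C), then the Hadamard product C ∘ B is positive semidefinite. -/
open Matrix
open scoped Matrix ComplexOrder

/-!
Write `B = ∑ₖ λₖ uₖ uₖᴴ`. Then `xᴴ (C ⊙ B) x = ∑ₖ λₖ aₖ` with `aₖ = zₖᴴ C zₖ`, `zₖ = ūₖ * x`,
and `aₖ ≥ λ_min(C) ‖zₖ‖²`. Let `q = n - r` and let the columns of `Y` be the `uₖ` spanning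
`ker B`, so that `∑_{λₖ ≠ 0} uₖ uₖᴴ = 1 - Y Yᴴ`. Cauchy–Binet applied to `W_iᴴ W_j`, where
`W_i = [e_i | Y]`, writes `(q + 1)! (1 - Y Yᴴ)` as a sum of rank-one matrices `d dᴴ` with `d`
supported on `q + 1` indices, on which `C - μ` is positive semidefinite (`μ = μ_{q+1}(C)`).
Hence `(C - μ) ⊙ (1 - Y Yᴴ) ⪰ 0`, i.e. `∑_{λₖ ≠ 0} aₖ ≥ μ ∑_{λₖ ≠ 0} ‖zₖ‖²`. Splitting
`λₖ = λ_r + (λₖ - λ_r)` with `0 ≤ λₖ - λ_r ≤ λ₁ - λ_r` gives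
`∑ λₖ aₖ ≥ (λ_r μ + (λ₁ - λ_r) λ_min(C)) ∑ ‖zₖ‖² ≥ 0` when `λ_min(C) < 0`; otherwise `C ⪰ 0`
and the Schur product theorem applies.
-/

open Finset Equiv

theorem sum_mul_nonneg_of_weight_ratio {ι : Type*} (s : Finset ι) {w a ν : ι → ℝ}
    {lo hi m μ : ℝ} (hlo : 0 < lo) (hw : ∀ k ∈ s, lo ≤ w k ∧ w k ≤ hi)
    (hν : ∀ k ∈ s, 0 ≤ ν k) (ha : ∀ k ∈ s, m * ν k ≤ a k)
    (hsum : μ * ∑ k ∈ s, ν k ≤ ∑ k ∈ s, a k) (hm : m ≤ 0) (hμ : -(hi / lo - 1) * m ≤ μ) :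
    0 ≤ ∑ k ∈ s, w k * a k := by
  have hterm : ∀ k ∈ s, lo * a k + (hi - lo) * m * ν k ≤ w k * a k := fun k hk => by
    obtain ⟨hlow, hhigh⟩ := hw k hk
    have hmν : m * ν k ≤ 0 := mul_nonpos_of_nonpos_of_nonneg hm (hν k hk)
    nlinarith [mul_le_mul_of_nonneg_left (ha k hk) (sub_nonneg.2 hlow)]
  have hbracket : 0 ≤ lo * μ + (hi - lo) * m := by
    have := mul_le_mul_of_nonneg_left hμ hlo.le
    field_simp at this
    linarith
  calc 0 ≤ lo * (∑ k ∈ s, a k - μ * ∑ k ∈ s, ν k)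
          + (lo * μ + (hi - lo) * m) * ∑ k ∈ s, ν k :=
        add_nonneg (mul_nonneg hlo.le (sub_nonneg.2 hsum)) (mul_nonneg hbracket (sum_nonneg hν))
    _ = ∑ k ∈ s, (lo * a k + (hi - lo) * m * ν k) := by
        rw [sum_add_distrib, ← mul_sum, ← mul_sum]; ring
    _ ≤ ∑ k ∈ s, w k * a k := sum_le_sum hterm

namespace Matrix

section

variable {R : Type*} [CommRing R] {κ N : Type*} [Fintype κ] [DecidableEq κ] [Fintype N]

theorem det_mul_eq_sum_det_submatrix_mul_prod (M : Matrix κ N R) (Q : Matrix N κ R) :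
    (M * Q).det = ∑ g : κ → N, (M.submatrix id g).det * ∏ a, Q (g a) a := by
  simp only [det_apply', mul_apply, prod_univ_sum, mul_sum, Fintype.piFinset_univ, sum_mul,
    submatrix_apply, id]
  rw [Finset.sum_comm]
  exact sum_congr rfl fun g _ => sum_congr rfl fun σ _ => by rw [prod_mul_distrib, mul_assoc]

/-- The Cauchy–Binet formula, summed over all maps `g` instead of over subsets of `N`. -/
theorem sum_det_submatrix_mul_det_submatrix (M : Matrix κ N R) (Q : Matrix N κ R) :
    ∑ g : κ → N, (M.submatrix id g).det * (Q.submatrix g id).det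
      = (Fintype.card κ).factorial * (M * Q).det := by
  have hperm (σ : Perm κ) :
      ∑ g : κ → N, (M.submatrix id g).det * (Perm.sign σ * ∏ a, Q (g (σ a)) a)
        = (M * Q).det := by
    rw [det_mul_eq_sum_det_submatrix_mul_prod]
    refine Fintype.sum_equiv (arrowCongr σ.symm (Equiv.refl N)) _ _ fun g => ?_
    change _ = ((M.submatrix id g).submatrix id σ).det * _
    rw [det_permute', mul_left_comm, mul_assoc]
    rfl
  simp_rw [det_apply' (Q.submatrix _ id), mul_sum, submatrix_apply, id]
  rw [Finset.sum_comm]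
  simp_rw [hperm, sum_const, card_univ, Fintype.card_perm, nsmul_eq_mul]

end

section

variable {R : Type*} [CommSemiring R] {ι l m N : Type*} [Fintype N]

theorem dotProduct_mulVec_eq_submatrix_of_support [Fintype ι] (A : Matrix N N R) {g : ι → N}
    (hg : g.Injective) {w v : N → R} (hw : ∀ i ∉ Set.range g, w i = 0)
    (hv : ∀ i ∉ Set.range g, v i = 0) :
    w ⬝ᵥ (A *ᵥ v) = (w ∘ g) ⬝ᵥ (A.submatrix g g *ᵥ (v ∘ g)) := by
  simp only [dotProduct, mulVec, submatrix_apply, Function.comp_apply]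
  symm
  refine Fintype.sum_of_injective g hg _ _ (fun i hi => by simp [hw i hi]) fun a => ?_
  exact congrArg _ (Fintype.sum_of_injective g hg _ _ (fun j hj => by simp [hv j hj]) fun _ => rfl)

variable [StarRing R]

theorem star_dotProduct_hadamard_sum_vecMulVec_mulVec (A : Matrix N N R) (s : Finset ι)
    (c : ι → R) (u : ι → N → R) (x : N → R) :
    star x ⬝ᵥ ((A ⊙ ∑ k ∈ s, c k • vecMulVec (u k) (star (u k))) *ᵥ x)
      = ∑ k ∈ s, c k * (star (star (u k) * x) ⬝ᵥ (A *ᵥ (star (u k) * x))) := by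
  simp only [dotProduct, mulVec, hadamard_apply, sum_apply, smul_apply, vecMulVec_apply,
    Pi.star_apply, Pi.mul_apply, star_mul', star_star, smul_eq_mul, mul_sum, sum_mul]
  refine (sum_congr rfl fun i _ => sum_comm).trans (sum_comm.trans ?_)
  exact sum_congr rfl fun k _ => sum_congr rfl fun i _ => sum_congr rfl fun j _ => by ring

theorem mul_diagonal_mul_conjTranspose_eq_sum [Fintype m] [DecidableEq m] (U : Matrix l m R)
    (d : m → R) :
    U * diagonal d * Uᴴ = ∑ k, d k • vecMulVec (U.col k) (star (U.col k)) := by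
  ext i j
  rw [mul_apply]
  simp only [mul_diagonal, conjTranspose_apply, sum_apply, smul_apply, vecMulVec_apply,
    col_apply, Pi.star_apply, smul_eq_mul]
  exact sum_congr rfl fun k _ => by ring

theorem mul_conjTranspose_eq_sum_vecMulVec [Fintype m] [DecidableEq m] (U : Matrix l m R) :
    U * Uᴴ = ∑ k, vecMulVec (U.col k) (star (U.col k)) := by
  simpa using mul_diagonal_mul_conjTranspose_eq_sum U 1

end

section

variable {R : Type*} [CommRing R] [StarRing R] {κ N : Type*} [Fintype κ] [DecidableEq κ]
  [DecidableEq N]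

def adjoinBasisCol (Y : Matrix N κ R) (i : N) : Matrix N (Unit ⊕ κ) R :=
  fromCols (replicateCol Unit (Pi.single i 1)) Y

theorem det_conjTranspose_adjoinBasisCol_mul [Fintype N] {Y : Matrix N κ R} (hY : Yᴴ * Y = 1)
    (i j : N) :
    ((adjoinBasisCol Y i)ᴴ * adjoinBasisCol Y j).det = (1 - Y * Yᴴ : Matrix N N R) i j := by
  rw [adjoinBasisCol, adjoinBasisCol, conjTranspose_fromCols_eq_fromRows_conjTranspose,
    fromRows_mul_fromCols, hY, det_fromBlocks_one₂₂, det_unique]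
  simp [mul_apply, one_apply, Pi.single_apply, eq_comm]

def adjoinBasisColMinor (Y : Matrix N κ R) (g : Unit ⊕ κ → N) (i : N) : R :=
  star ((adjoinBasisCol Y i).submatrix g id).det

theorem adjoinBasisColMinor_eq_zero_of_notMem_range (Y : Matrix N κ R) {g : Unit ⊕ κ → N}
    {i : N} (hi : i ∉ Set.range g) : adjoinBasisColMinor Y g i = 0 := by
  rw [adjoinBasisColMinor, det_eq_zero_of_column_eq_zero (Sum.inl ()) fun a => ?_, star_zero]
  have hai : g a ≠ i := fun h => hi ⟨a, h⟩
  simp [adjoinBasisCol, hai]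

theorem adjoinBasisColMinor_eq_zero_of_not_injective (Y : Matrix N κ R) {g : Unit ⊕ κ → N}
    (hg : ¬ g.Injective) : adjoinBasisColMinor Y g = 0 := by
  obtain ⟨a, b, hab, hne⟩ := Function.not_injective_iff.mp hg
  ext i
  rw [adjoinBasisColMinor, det_zero_of_row_eq hne (by ext c; simp [hab]), star_zero,
    Pi.zero_apply]

theorem factorial_smul_one_sub_mul_conjTranspose [Fintype N] {Y : Matrix N κ R}
    (hY : Yᴴ * Y = 1) :
    ((Fintype.card κ + 1).factorial : R) • (1 - Y * Yᴴ)
      = ∑ g, vecMulVec (adjoinBasisColMinor Y g) (star (adjoinBasisColMinor Y g)) := by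
  ext i j
  have hcard : Fintype.card (Unit ⊕ κ) = Fintype.card κ + 1 := by simp [add_comm]
  rw [smul_apply, smul_eq_mul, ← det_conjTranspose_adjoinBasisCol_mul hY, ← hcard,
    ← sum_det_submatrix_mul_det_submatrix, sum_apply]
  refine sum_congr rfl fun g _ => ?_
  rw [vecMulVec_apply, Pi.star_apply, adjoinBasisColMinor, adjoinBasisColMinor, star_star,
    ← det_conjTranspose, conjTranspose_submatrix]

theorem posSemidef_hadamard_one_sub_mul_conjTranspose [Fintype N] {𝕜 : Type*} [RCLike 𝕜]
    {A : Matrix N N 𝕜} (hA : A.IsHermitian)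
    (hsub : ∀ f : Fin (Fintype.card κ + 1) → N, f.Injective → (A.submatrix f f).PosSemidef)
    {Y : Matrix N κ 𝕜} (hY : Yᴴ * Y = 1) : (A ⊙ (1 - Y * Yᴴ)).PosSemidef := by
  set d := adjoinBasisColMinor Y
  have hP : 1 - Y * Yᴴ =
      ∑ g, ((Fintype.card κ + 1).factorial : 𝕜)⁻¹ • vecMulVec (d g) (star (d g)) := by
    rw [← smul_sum, ← factorial_smul_one_sub_mul_conjTranspose hY, smul_smul,
      inv_mul_cancel₀ (by positivity), one_smul]
  refine .of_dotProduct_mulVec_nonneg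
    (hA.hadamard (isHermitian_one.sub (isHermitian_mul_conjTranspose_self Y))) fun x => ?_
  rw [hP, star_dotProduct_hadamard_sum_vecMulVec_mulVec]
  refine sum_nonneg fun g _ => mul_nonneg (by positivity) ?_
  by_cases hg : g.Injective
  · let e := (Fintype.equivFinOfCardEq (by simp [add_comm] :
      Fintype.card (Unit ⊕ κ) = Fintype.card κ + 1)).symm
    have hAg := hsub (g ∘ e) (hg.comp e.injective)
    rw [← submatrix_submatrix, posSemidef_submatrix_equiv] at hAg
    have hsupp : ∀ i ∉ Set.range g, (star (d g) * x) i = 0 := fun i hi => by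
      simp [d, adjoinBasisColMinor_eq_zero_of_notMem_range Y hi]
    rw [dotProduct_mulVec_eq_submatrix_of_support A hg (fun i hi => by simp [hsupp i hi]) hsupp]
    exact hAg.dotProduct_mulVec_nonneg _
  · simp [d, adjoinBasisColMinor_eq_zero_of_not_injective Y hg]

end

section

variable {𝕜 : Type*} [RCLike 𝕜] {n : Type*} [Fintype n]

theorem IsHermitian.coe_re_star_dotProduct_mulVec {A : Matrix n n 𝕜} (hA : A.IsHermitian)
    (x : n → 𝕜) : (RCLike.re (star x ⬝ᵥ (A *ᵥ x)) : 𝕜) = star x ⬝ᵥ (A *ᵥ x) :=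
  RCLike.conj_eq_iff_re.mp (RCLike.conj_eq_iff_im.mpr (hA.im_star_dotProduct_mulVec_self x))

variable [DecidableEq n]

theorem re_star_dotProduct_sub_smul_one_mulVec (A : Matrix n n 𝕜) (c : ℝ) (x : n → 𝕜) :
    RCLike.re (star x ⬝ᵥ ((A - (c : 𝕜) • 1) *ᵥ x))
      = RCLike.re (star x ⬝ᵥ (A *ᵥ x)) - c * RCLike.re (star x ⬝ᵥ x) := by
  simp [sub_mulVec, smul_mulVec, RCLike.smul_re]

theorem IsHermitian.posSemidef_sub_smul_one {A : Matrix n n 𝕜} (hA : A.IsHermitian) {c : ℝ}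
    (hc : ∀ i, c ≤ hA.eigenvalues i) : (A - (c : 𝕜) • 1).PosSemidef := by
  have hdiag : A - (c : 𝕜) • 1 = Unitary.conjStarAlgAut 𝕜 _ hA.eigenvectorUnitary
      (diagonal (RCLike.ofReal ∘ (hA.eigenvalues - fun _ => c))) := by
    conv_lhs => rw [hA.spectral_theorem]
    rw [← map_one (Unitary.conjStarAlgAut 𝕜 _ hA.eigenvectorUnitary), ← map_smul,
      ← map_sub]
    congr 1
    ext i j
    by_cases h : i = j <;> simp [h, Algebra.algebraMap_eq_smul_one]
  rw [hdiag, Unitary.conjStarAlgAut_apply,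
    IsUnit.posSemidef_star_right_conjugate_iff Unitary.isUnit_coe, posSemidef_diagonal_iff]
  simpa [Pi.le_def] using hc

end

section

variable {𝕜 : Type*} [RCLike 𝕜] {ι n : Type*} [Fintype ι] [DecidableEq ι] [DecidableEq n]

theorem IsHermitian.posSemidef_submatrix_sub_smul_one {A : Matrix n n 𝕜} (hA : A.IsHermitian) {f : ι → n} (hf : f.Injective) {c : ℝ}
    (hc : ∀ i, c ≤ (hA.submatrix f).eigenvalues i) :
    ((A - (c : 𝕜) • 1).submatrix f f).PosSemidef := by
  convert (hA.submatrix f).posSemidef_sub_smul_one hc using 1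
  ext i j
  simp [one_apply, hf.eq_iff]

end

section

variable {𝕜 : Type*} [RCLike 𝕜] {n : Type*} [Fintype n] [DecidableEq n]

theorem IsHermitian.eq_sum_smul_vecMulVec {A : Matrix n n 𝕜} (hA : A.IsHermitian) :
    A = ∑ k, (hA.eigenvalues k : 𝕜) •
      vecMulVec ((hA.eigenvectorUnitary : Matrix n n 𝕜).col k)
        (star ((hA.eigenvectorUnitary : Matrix n n 𝕜).col k)) := by
  conv_lhs => rw [hA.spectral_theorem]
  rw [Unitary.conjStarAlgAut_apply, star_eq_conjTranspose, mul_diagonal_mul_conjTranspose_eq_sum]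
  rfl

theorem IsHermitian.sum_star_dotProduct_mulVec_nonneg_of_submatrix {A B : Matrix n n 𝕜}
    (hA : A.IsHermitian) (hB : B.IsHermitian)
    (hsub : ∀ f : Fin (Fintype.card n - B.rank + 1) → n, f.Injective →
      (A.submatrix f f).PosSemidef) (x : n → 𝕜) :
    0 ≤ ∑ k with hB.eigenvalues k ≠ 0,
      star (star ((hB.eigenvectorUnitary : Matrix n n 𝕜).col k) * x) ⬝ᵥ
        (A *ᵥ (star ((hB.eigenvectorUnitary : Matrix n n 𝕜).col k) * x)) := by
  set U : Matrix n n 𝕜 := ↑hB.eigenvectorUnitary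
  let Y : Matrix n {k // hB.eigenvalues k = 0} 𝕜 := U.submatrix id Subtype.val
  have hY : Yᴴ * Y = 1 := by
    rw [conjTranspose_submatrix, ← submatrix_mul _ _ _ id _ Function.bijective_id,
      show Uᴴ * U = 1 from mem_unitaryGroup_iff'.mp hB.eigenvectorUnitary.2,
      submatrix_one _ Subtype.val_injective]
  have hcard : Fintype.card {k // hB.eigenvalues k = 0} = Fintype.card n - B.rank := by
    rw [hB.rank_eq_card_non_zero_eigs, ← Fintype.card_subtype_compl]
    exact Fintype.card_congr (Equiv.subtypeEquivRight fun k => not_not.symm)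
  have hYY : Y * Yᴴ = ∑ k with hB.eigenvalues k = 0, vecMulVec (U.col k) (star (U.col k)) := by
    rw [mul_conjTranspose_eq_sum_vecMulVec]
    exact (sum_subtype _ (fun k => by simp) fun k => vecMulVec (U.col k) (star (U.col k))).symm
  have hP : 1 - Y * Yᴴ =
      ∑ k with hB.eigenvalues k ≠ 0, (1 : 𝕜) • vecMulVec (U.col k) (star (U.col k)) := by
    rw [← show U * Uᴴ = 1 from mem_unitaryGroup_iff.mp hB.eigenvectorUnitary.2, hYY,
      mul_conjTranspose_eq_sum_vecMulVec,
      ← sum_filter_add_sum_filter_not univ (fun k => hB.eigenvalues k = 0), add_sub_cancel_left]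
    simp only [one_smul]
  have := (posSemidef_hadamard_one_sub_mul_conjTranspose hA (hcard ▸ hsub) hY)
    |>.dotProduct_mulVec_nonneg x
  rw [hP, star_dotProduct_hadamard_sum_vecMulVec_mulVec] at this
  simpa only [one_mul] using this

theorem posSemidef_hadamard_of_eigenvalue_bounds {C B : Matrix n n 𝕜} (hC : C.IsHermitian)
    (hB : B.PosSemidef) {m μ lo hi : ℝ} (hm : ∀ i, m ≤ hC.eigenvalues i) (hm0 : m ≤ 0)
    (hμ : ∀ f : Fin (Fintype.card n - B.rank + 1) → n, f.Injective →
      ∀ i, μ ≤ (hC.submatrix f).eigenvalues i)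
    (hlo : 0 < lo) (hlo_le : ∀ k, hB.1.eigenvalues k ≠ 0 → lo ≤ hB.1.eigenvalues k)
    (hle_hi : ∀ k, hB.1.eigenvalues k ≤ hi) (hκ : -(hi / lo - 1) * m ≤ μ) :
    (C ⊙ B).PosSemidef := by
  refine .of_dotProduct_mulVec_nonneg (hC.hadamard hB.1) fun x => ?_
  set S := univ.filter fun k => hB.1.eigenvalues k ≠ 0 with hS
  set z : n → n → 𝕜 := fun k => star ((hB.1.eigenvectorUnitary : Matrix n n 𝕜).col k) * x
  set a : n → ℝ := fun k => RCLike.re (star (z k) ⬝ᵥ (C *ᵥ z k))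
  set ν : n → ℝ := fun k => RCLike.re (star (z k) ⬝ᵥ z k)
  have hCμ : (C - (μ : 𝕜) • 1).IsHermitian :=
    hC.sub (isHermitian_one.smul (RCLike.conj_ofReal μ))
  have hsum : μ * ∑ k ∈ S, ν k ≤ ∑ k ∈ S, a k := by
    have := RCLike.nonneg_iff.mp
      (hCμ.sum_star_dotProduct_mulVec_nonneg_of_submatrix hB.1
        (fun f hf => hC.posSemidef_submatrix_sub_smul_one hf (hμ f hf)) x) |>.1
    simp only [map_sum, re_star_dotProduct_sub_smul_one_mulVec] at this
    rw [sum_sub_distrib, ← mul_sum] at this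
    linarith
  have ha (k : n) : m * ν k ≤ a k := by
    have := (hC.posSemidef_sub_smul_one hm).re_dotProduct_nonneg (z k)
    rw [re_star_dotProduct_sub_smul_one_mulVec] at this
    linarith
  have hν (k : n) : 0 ≤ ν k := (RCLike.nonneg_iff.mp (dotProduct_star_self_nonneg _)).1
  have hquad :
      star x ⬝ᵥ ((C ⊙ B) *ᵥ x) = ((∑ k ∈ S, hB.1.eigenvalues k * a k : ℝ) : 𝕜) := by
    conv_lhs => rw [hB.1.eq_sum_smul_vecMulVec]
    rw [star_dotProduct_hadamard_sum_vecMulVec_mulVec, hS,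
      ← sum_filter_of_ne (p := fun k => hB.1.eigenvalues k ≠ 0) fun k _ h => ?_]
    · push_cast
      exact sum_congr rfl fun k _ => congrArg _ (hC.coe_re_star_dotProduct_mulVec (z k)).symm
    · rintro hk
      simp [hk] at h
  rw [hquad, RCLike.ofReal_nonneg]
  exact sum_mul_nonneg_of_weight_ratio S hlo
    (fun k hk => ⟨hlo_le k (mem_filter.mp hk).2, hle_hi k⟩) (fun k _ => hν k) (fun k _ => ha k)
    hsum hm0 hκ

end

end Matrix

section

variable {n : ℕ} {A : Matrix (Fin n) (Fin n) ℂ}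

theorem lambdaMin_le (hA : A.IsHermitian) (i : Fin n) : lambdaMin hA ≤ hA.eigenvalues i :=
  ciInf_le (Set.finite_range _).bddBelow i

theorem le_lambdaMax (hA : A.IsHermitian) (i : Fin n) : hA.eigenvalues i ≤ lambdaMax hA :=
  le_ciSup (Set.finite_range _).bddAbove i

theorem finite_posEigenvalues (hA : A.IsHermitian) :
    {t : ℝ | (∃ i, hA.eigenvalues i = t) ∧ 0 < t}.Finite :=
  (Set.finite_range _).subset fun _ ht => ht.1

theorem lambdaMinPos_le (hA : A.IsHermitian) {i : Fin n} (hi : 0 < hA.eigenvalues i) :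
    lambdaMinPos hA ≤ hA.eigenvalues i :=
  csInf_le (finite_posEigenvalues hA).bddBelow ⟨⟨i, rfl⟩, hi⟩

theorem lambdaMinPos_pos (hA : A.IsHermitian) {i : Fin n} (hi : 0 < hA.eigenvalues i) :
    0 < lambdaMinPos hA := by
  have hne : {t : ℝ | (∃ i, hA.eigenvalues i = t) ∧ 0 < t}.Nonempty :=
    ⟨_, ⟨i, rfl⟩, hi⟩
  exact (hne.csInf_mem (finite_posEigenvalues hA)).2

theorem mu_le_eigenvalues {m : ℕ} (hA : A.IsHermitian) {f : Fin m → Fin n} (hf : f.Injective)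
    (i : Fin m) : mu m A ≤ (hA.submatrix f).eigenvalues i := by
  refine csInf_le (Set.Finite.bddBelow ?_) ⟨f, hf, hA.submatrix f, i, rfl⟩
  refine (Set.finite_range fun p : (Fin m → Fin n) × Fin m =>
    (hA.submatrix p.1).eigenvalues p.2).subset ?_
  rintro t ⟨g, -, -, j, rfl⟩
  exact ⟨(g, j), rfl⟩

end

/-- **Corollary.** Let `C, B` be Hermitian with `B` positive semidefinite and `r = rank B ≥ 1`.
If `μ_{n-r+1}(C) ≥ -(κ_eff(B) - 1) λ_min(C)`, then `C ⊙ B` is positive semidefinite. -/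
theorem stmt_10 {n : ℕ} (C B : Matrix (Fin n) (Fin n) ℂ) (hC : C.IsHermitian)
    (hB : B.PosSemidef) (r : ℕ) (hr : r = B.rank) (hr1 : 1 ≤ r)
    (hmu : mu (n - r + 1) C ≥ -(kappaEff hB.1 - 1) * lambdaMin hC) :
    (C ⊙ B).PosSemidef := by
  subst hr
  rcases le_or_gt 0 (lambdaMin hC) with hC0 | hC0
  · have hCpsd := hC.posSemidef_iff_eigenvalues_nonneg.mpr fun i => hC0.trans (lambdaMin_le hC i)
    exact hCpsd.hadamard hB
  have hpos {k} (hk : hB.1.eigenvalues k ≠ 0) : 0 < hB.1.eigenvalues k :=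
    (hB.eigenvalues_nonneg k).lt_of_ne' hk
  obtain ⟨⟨k, hk⟩⟩ : Nonempty {k // hB.1.eigenvalues k ≠ 0} :=
    Fintype.card_pos_iff.mp (hB.1.rank_eq_card_non_zero_eigs ▸ hr1)
  refine Matrix.posSemidef_hadamard_of_eigenvalue_bounds hC hB (lambdaMin_le hC) hC0.le ?_
    (lambdaMinPos_pos hB.1 (hpos hk)) (fun k hk => lambdaMinPos_le hB.1 (hpos hk))
    (le_lambdaMax hB.1) hmu
  rw [Fintype.card_fin]
  exact fun f hf => mu_le_eigenvalues hC hf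
end
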